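/- Let n>2 be an integer and g a nonnegative integer with gcd(n,g)=1. Set s_n = J_1 − J_n + 2·Σ_{i=1}^{n−2} J_i·(2J_n/(J_1 − J_{n+1}))^{n−(i+1)}, and assume s_n ≠ 0. Then the inverse of C_{n,g}(J) equals (1/s_n)·C·Q_gᵀ, where C is the circulant matrix with first row (c_0,…,c_{n−1}) given by c_0 = 1 + 2·Σ_{i=1}^{n−2} J_{n−i}(2J_n)^{i−1}/(J_1 − J_{n+1})^i, c_1 = −1 + 4·Σ_{i=1}^{n−2} J_{n−1−i}(2J_n)^{i−1}/(J_1 − J_{n+1})^i, and c_j = −2^{j−1}J_n^{j−2}/(J_1 − J_{n+1})^{j−1} for 2 ≤ j ≤ n−1. -/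

import Mathlib

open Matrix

/-- The `g`-circulant matrix of size `n` with first row `(a 0, a 1, …, a (n-1))`:
its `(i,j)` entry (0-indexed) equals `a ((j - i*g) mod n)`. -/
def gCirc {α : Type*} (n g : ℕ) (a : ℕ → α) : Matrix (Fin n) (Fin n) α :=
  Matrix.of fun i j => a ((j.val + (n - (i.val * g) % n)) % n)

/-- `Q_g`: the `g`-circulant matrix with first row `(1,0,…,0)`. -/
def Qg (n g : ℕ) : Matrix (Fin n) (Fin n) ℝ :=
  gCirc n g (fun m => if m = 0 then (1 : ℝ) else 0)

/-- `circ c`: the circulant (`1`-circulant) matrix with first row `(c 0, …, c (n-1))`. -/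
def circ (n : ℕ) (c : ℕ → ℝ) : Matrix (Fin n) (Fin n) ℝ :=
  gCirc n 1 c

/-!
When `gcd(n, g) = 1`, `Q_g` is a permutation matrix and `C_{n,g}(J) = Q_g A` with
`A = circ(J_1, …, J_n)`, so it suffices to show `A C = s_n I`. Let `S` be the cyclic shift and
`D = J_1 - J_{n+1}`. The Jacobsthal recurrence gives `A (1 - S - 2S²) = D - 2J_n S`, and the
formulas for `c` amount to `C (D - 2J_n S) = s_n (1 - S - 2S²)`. Hence `E = A C - s_n I` satisfies
`E (D - 2J_n S) = 0`: down the first column of `E` each entry is `2J_n / D` times the previous one.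
This alone does not force `E = 0` (for even `n`, `D = -2J_n` and `D - 2J_n S` is singular), but a
direct computation shows that the top entry of `E` vanishes.
-/

open Finset

theorem gCirc_apply {α : Type*} (n g : ℕ) (a : ℕ → α) (i j : Fin n) :
    gCirc n g a i j = a (j - ⟨i * g % n, Nat.mod_lt _ i.pos⟩ : Fin n) := by
  simp [gCirc, Fin.val_sub, add_comm]

theorem circ_eq_transpose_circulant (n : ℕ) (c : ℕ → ℝ) :
    circ n c = (circulant fun i : Fin n => c i)ᵀ := by
  ext i j
  rw [circ, gCirc_apply, transpose_apply, circulant_apply]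
  congr
  simp [Nat.mod_eq_of_lt i.isLt]

theorem Qg_apply (n g : ℕ) (i k : Fin n) :
    Qg n g i k = if k = ⟨i * g % n, Nat.mod_lt _ i.pos⟩ then 1 else 0 := by
  have : NeZero n := ⟨i.pos.ne'⟩
  simp [Qg, gCirc_apply, Fin.val_eq_zero_iff, sub_eq_zero]

theorem Qg_mul_apply (n g : ℕ) (X : Matrix (Fin n) (Fin n) ℝ) (i j : Fin n) :
    (Qg n g * X) i j = X ⟨i * g % n, Nat.mod_lt _ i.pos⟩ j := by
  simp [mul_apply, Qg_apply]

theorem gCirc_eq_Qg_mul_circ (n g : ℕ) (a : ℕ → ℝ) : gCirc n g a = Qg n g * circ n a := by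
  ext i j
  rw [Qg_mul_apply, circ, gCirc_apply, gCirc_apply]
  simp

theorem Qg_mul_transpose_self {n g : ℕ} (h : n.Coprime g) : Qg n g * (Qg n g)ᵀ = 1 := by
  ext i j
  rw [Qg_mul_apply, transpose_apply, Qg_apply, one_apply]
  refine if_congr ⟨fun hij => Fin.ext ?_, fun hij => by rw [hij]⟩ rfl rfl
  have hmod : i.val % n = j.val % n :=
    Nat.ModEq.cancel_right_of_coprime h (Fin.mk.inj_iff.mp hij)
  rwa [Nat.mod_eq_of_lt i.isLt, Nat.mod_eq_of_lt j.isLt] at hmod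

theorem Fin.eq_zero_of_mul_apply_eq_mul_apply_sub_one {M : Type*} [MulZeroClass M]
    [NoZeroDivisors M] {n : ℕ} {e : Fin (n + 1) → M} {d b : M} (hd : d ≠ 0)
    (h : ∀ i, d * e i = b * e (i - 1)) (h0 : e 0 = 0) : e = 0 := by
  funext i
  induction i using Fin.induction with
  | zero => exact h0
  | succ i ih =>
    have hi : i.succ - 1 = i.castSucc := Fin.ext (by simp [Fin.coe_sub_one])
    simpa [hi, ih, hd] using h i.succ

theorem circulant_mul_eq_smul_one_of {K : Type*} [CommRing K] [NoZeroDivisors K] {n : ℕ}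
    {a c : Fin (n + 1) → K} {L : Matrix (Fin (n + 1)) (Fin (n + 1)) K} {s d b : K} (hd : d ≠ 0)
    (haL : circulant a * L = circulant (d • Pi.single 0 1 - b • Pi.single 1 1))
    (hcM : circulant c * circulant (d • Pi.single 0 1 - b • Pi.single 1 1) = s • L)
    (h0 : (circulant a *ᵥ c) 0 = s) :
    circulant a * circulant c = s • 1 := by
  set e := circulant a *ᵥ c - s • Pi.single 0 1
  have he : circulant e = circulant a * circulant c - s • 1 := by
    rw [circulant_sub, circulant_smul, circulant_single_one, circulant_mul]
  have hker : circulant e * circulant (d • Pi.single 0 1 - b • Pi.single 1 1) = 0 := by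
    rw [he, sub_mul, mul_assoc, hcM, mul_smul_comm, haL, smul_mul_assoc, one_mul, sub_self]
  rw [circulant_mul, ← circulant_zero, circulant_inj] at hker
  have he_rec : ∀ i, d * e i = b * e (i - 1) := fun i => by
    simpa [mulVec_sub, mulVec_smul, circulant_apply, sub_eq_zero, mul_comm] using congr_fun hker i
  have he0 : e = 0 :=
    Fin.eq_zero_of_mul_apply_eq_mul_apply_sub_one hd he_rec (by simp [e, h0])
  rw [← sub_eq_zero, ← he, he0, circulant_zero]

theorem circulant_mul_eq_smul_of_recurrence {K : Type*} [CommRing K] {m : ℕ} {c : ℕ → K}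
    {d b s : K} (h0 : d * c 0 - b * c (m + 2) = s) (h1 : d * c 1 - b * c 0 = -s)
    (h2 : d * c 2 - b * c 1 = -2 * s)
    (h3 : ∀ k, k + 3 ≤ m + 2 → d * c (k + 3) - b * c (k + 2) = 0) :
    circulant (fun i : Fin (m + 3) => c i) * circulant (d • Pi.single 0 1 - b • Pi.single 1 1) =
      s • circulant (Pi.single 0 1 - Pi.single 1 1 - (2 : K) • Pi.single 2 1) := by
  have htwo : (2 : Fin (m + 3)) = ⟨2, by omega⟩ := rfl
  rw [circulant_mul, ← circulant_smul, circulant_inj, htwo]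
  funext i
  simp only [mulVec_sub, mulVec_smul, mulVec_single_one, Pi.sub_apply, Pi.smul_apply,
    smul_eq_mul, col_apply, circulant_apply, Pi.single_apply, sub_zero]
  rcases i with ⟨_ | _ | _ | k, hk⟩ <;> simp [Fin.coe_sub_one, Fin.ext_iff]
  · exact h0
  · exact h1
  · linear_combination h2
  · exact h3 k (by omega)

theorem circulant_mulVec_apply_zero {K : Type*} [CommRing K] (m : ℕ) (a c : ℕ → K) :
    (circulant (fun i : Fin (m + 3) => a i) *ᵥ fun i => c i) 0 =
      a 0 * c 0 + a (m + 2) * c 1 + ∑ k ∈ range (m + 1), a (m + 1 - k) * c (k + 2) := by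
  simp only [mulVec, dotProduct, circulant_apply, zero_sub, Fin.val_neg']
  rw [Fin.sum_univ_eq_sum_range (fun j => a ((m + 3 - j) % (m + 3)) * c j), sum_range_succ',
    sum_range_succ']
  have hsum : ∑ k ∈ range (m + 1), a ((m + 3 - (k + 1 + 1)) % (m + 3)) * c (k + 1 + 1) =
      ∑ k ∈ range (m + 1), a (m + 1 - k) * c (k + 2) :=
    sum_congr rfl fun k hk => by
      rw [mem_range] at hk
      rw [Nat.mod_eq_of_lt (by omega), show m + 3 - (k + 1 + 1) = m + 1 - k by omega]
  rw [hsum, Nat.sub_zero, Nat.mod_self,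
    show (m + 3 - (0 + 1)) % (m + 3) = m + 2 from Nat.mod_eq_of_lt (by omega)]
  ring

def geomConv {R : Type*} [Semiring R] (J : ℕ → R) (t : R) (k : ℕ) : R :=
  ∑ i ∈ range k, J (k - i) * t ^ (i + 1)

section geomConv

variable {R : Type*} [CommRing R] (J : ℕ → R) (t : R)

theorem geomConv_succ (k : ℕ) : geomConv J t (k + 1) = t * (J (k + 1) + geomConv J t k) := by
  rw [geomConv, sum_range_succ', geomConv, mul_add, mul_sum, add_comm]
  congr 1
  · rw [Nat.sub_zero, zero_add, pow_one, mul_comm]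
  · exact sum_congr rfl fun i _ => by rw [Nat.add_sub_add_right]; ring

theorem geomConv_eq_sum_Icc (k : ℕ) :
    geomConv J t k = ∑ i ∈ Icc 1 k, J (k + 1 - i) * t ^ i := by
  rw [← Ico_add_one_right_eq_Icc, sum_Ico_eq_sum_range, geomConv, Nat.add_sub_cancel]
  exact sum_congr rfl fun i _ => by rw [add_comm 1 i, Nat.add_sub_add_right]

theorem sum_Icc_mul_pow_sub_eq_geomConv (n : ℕ) :
    ∑ i ∈ Icc 1 (n - 2), J i * t ^ (n - (i + 1)) = geomConv J t (n - 2) := by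
  rw [geomConv_eq_sum_Icc]
  refine sum_nbij' (fun i => n - 1 - i) (fun i => n - 1 - i) ?_ ?_ ?_ ?_ ?_ <;>
    intro i hi <;> simp only [mem_Icc] at hi ⊢
  iterate 4 omega
  congr 2 <;> omega

theorem sum_Icc_sub_one_mul_pow_eq_geomConv (n : ℕ) :
    ∑ i ∈ Icc 1 (n - 2), J (n - 1 - i) * t ^ i = geomConv J t (n - 2) := by
  rw [geomConv_eq_sum_Icc]
  refine sum_congr rfl fun i hi => ?_
  rw [mem_Icc] at hi
  congr 2
  omega

theorem sum_Icc_mul_pow_eq_geomConv_sub {n : ℕ} (hn : 2 ≤ n) :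
    ∑ i ∈ Icc 1 (n - 2), J (n - i) * t ^ i = geomConv J t (n - 1) - J 1 * t ^ (n - 1) := by
  rw [geomConv_eq_sum_Icc, show n - 1 = n - 2 + 1 by omega, sum_Icc_succ_top (by omega),
    show n - 2 + 1 + 1 - (n - 2 + 1) = 1 by omega, add_sub_cancel_right]
  refine sum_congr rfl fun i hi => ?_
  rw [mem_Icc] at hi
  congr 2
  omega

variable {J}

theorem geomConv_add_two (hJ0 : J 0 = 0) (hJ1 : J 1 = 1)
    (hrec : ∀ m, J (m + 2) = J (m + 1) + 2 * J m) (k : ℕ) :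
    geomConv J t (k + 2) = geomConv J t (k + 1) + 2 * geomConv J t k + t ^ (k + 2) := by
  induction k with
  | zero => rw [geomConv_succ, geomConv_succ, hrec 0, hJ0, hJ1]; simp [geomConv]; ring
  | succ k ih =>
    linear_combination geomConv_succ J t (k + 2) - geomConv_succ J t (k + 1)
      - 2 * geomConv_succ J t k + t * hrec (k + 1) + t * ih

end geomConv

section Scaling

variable {K : Type*} [Field K] (y D : K)

theorem mul_two_mul_sum_Icc_pow_div_pow (f : ℕ → K) (k : ℕ) :
    y * (2 * ∑ i ∈ Icc 1 k, f i * (2 * y) ^ (i - 1) / D ^ i) =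
      ∑ i ∈ Icc 1 k, f i * (2 * y / D) ^ i := by
  rw [mul_sum, mul_sum]
  refine sum_congr rfl fun i hi => ?_
  obtain ⟨j, rfl⟩ : ∃ j, i = j + 1 := ⟨i - 1, by rw [mem_Icc] at hi; omega⟩
  rw [Nat.add_sub_cancel, div_pow, pow_succ (2 * y)]
  ring

theorem mul_two_pow_mul_pow_div_pow {j : ℕ} (hj : 2 ≤ j) :
    y * (2 ^ (j - 1) * y ^ (j - 2) / D ^ (j - 1)) = (2 * y / D) ^ (j - 1) := by
  obtain ⟨k, rfl⟩ : ∃ k, j = k + 2 := ⟨j - 2, by omega⟩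
  rw [show k + 2 - 1 = k + 1 by omega, Nat.add_sub_cancel, div_pow, mul_pow, pow_succ y]
  ring

end Scaling

section Jacobsthal

variable {J : ℕ → ℝ}

theorem one_le_jacobsthal_succ (hJ0 : J 0 = 0) (hJ1 : J 1 = 1)
    (hrec : ∀ m, J (m + 2) = J (m + 1) + 2 * J m) (k : ℕ) : 1 ≤ J (k + 1) := by
  suffices ∀ k, 0 ≤ J k ∧ 1 ≤ J (k + 1) from (this k).2
  intro k
  induction k with
  | zero => simp [hJ0, hJ1]
  | succ k ih => exact ⟨by linarith [ih.2], by rw [hrec k]; linarith [ih.1, ih.2]⟩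

theorem jacobsthal_one_sub_ne_zero (hJ0 : J 0 = 0) (hJ1 : J 1 = 1)
    (hrec : ∀ m, J (m + 2) = J (m + 1) + 2 * J m) {n : ℕ} (hn : 2 ≤ n) :
    J 1 - J (n + 1) ≠ 0 := by
  obtain ⟨m, rfl⟩ : ∃ m, n = m + 2 := ⟨n - 2, by omega⟩
  have h1 := one_le_jacobsthal_succ hJ0 hJ1 hrec (m + 1)
  have h2 := one_le_jacobsthal_succ hJ0 hJ1 hrec m
  rw [hrec (m + 1)]
  linarith

theorem circulant_jacobsthal_mul (hJ0 : J 0 = 0) (hJ1 : J 1 = 1)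
    (hrec : ∀ m, J (m + 2) = J (m + 1) + 2 * J m) (m : ℕ) :
    circulant (fun i : Fin (m + 3) => J (i + 1)) *
        circulant (Pi.single 0 1 - Pi.single 1 1 - (2 : ℝ) • Pi.single 2 1) =
      circulant ((1 - J (m + 4)) • Pi.single 0 1 - (2 * J (m + 3)) • Pi.single 1 1) := by
  have h2 : ∀ i : Fin (m + 3), i - 2 = i - 1 - 1 := fun i => by rw [sub_sub]; rfl
  rw [circulant_mul, circulant_inj]
  funext i
  simp only [mulVec_sub, mulVec_smul, mulVec_single_one, Pi.sub_apply, Pi.smul_apply,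
    smul_eq_mul, col_apply, circulant_apply, Pi.single_apply, h2, sub_zero]
  rcases i with ⟨_ | _ | k, hk⟩
  · simp [Fin.coe_sub_one, hJ1]
    linear_combination hrec (m + 2)
  · simp [hrec 0, hJ0]
  · simp [Fin.coe_sub_one, Fin.ext_iff, hrec (k + 1)]

theorem jacobsthal_mulVec_apply_zero (hJ1 : J 1 = 1) (m : ℕ) {s t : ℝ} {c : ℕ → ℝ}
    (hN : J (m + 3) ≠ 0) (hs : s = 1 - J (m + 3) + 2 * geomConv J t (m + 1))
    (hc0 : J (m + 3) * c 0 = J (m + 3) + (geomConv J t (m + 2) - t ^ (m + 2)))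
    (hc1 : J (m + 3) * c 1 = -J (m + 3) + 2 * geomConv J t (m + 1))
    (hcj : ∀ k ≤ m, J (m + 3) * c (k + 2) = -t ^ (k + 1)) :
    (circulant (fun i : Fin (m + 3) => J (i + 1)) *ᵥ fun i => c i) 0 = s := by
  have hsum : J (m + 3) * ∑ k ∈ range (m + 1), J (m + 1 - k + 1) * c (k + 2) =
      -(geomConv J t (m + 2) - t ^ (m + 2)) := by
    rw [geomConv, sum_range_succ (fun i => J (m + 2 - i) * t ^ (i + 1)) (m + 1),
      show m + 2 - (m + 1) = 1 by omega, hJ1, one_mul, add_sub_cancel_right, mul_sum,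
      ← sum_neg_distrib]
    refine sum_congr rfl fun k hk => ?_
    rw [mem_range] at hk
    rw [show m + 1 - k + 1 = m + 2 - k by omega, mul_left_comm, hcj k (by omega)]
    ring
  rw [circulant_mulVec_apply_zero m (fun k => J (k + 1)) c]
  apply mul_left_cancel₀ hN
  rw [zero_add, hJ1, one_mul]
  linear_combination hc0 + J (m + 3) * hc1 + hsum - J (m + 3) * hs

theorem circulant_jacobsthal_mul_circulant (hJ0 : J 0 = 0) (hJ1 : J 1 = 1)
    (hrec : ∀ m, J (m + 2) = J (m + 1) + 2 * J m) (m : ℕ) {s t : ℝ} {c : ℕ → ℝ}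
    (ht : (1 - J (m + 4)) * t = 2 * J (m + 3))
    (hs : s = 1 - J (m + 3) + 2 * geomConv J t (m + 1))
    (hc0 : J (m + 3) * c 0 = J (m + 3) + (geomConv J t (m + 2) - t ^ (m + 2)))
    (hc1 : J (m + 3) * c 1 = -J (m + 3) + 2 * geomConv J t (m + 1))
    (hcj : ∀ k ≤ m, J (m + 3) * c (k + 2) = -t ^ (k + 1)) :
    circulant (fun i : Fin (m + 3) => J (i + 1)) * circulant (fun i : Fin (m + 3) => c i) =
      s • 1 := by
  have hN : J (m + 3) ≠ 0 :=
    (zero_lt_one.trans_le (one_le_jacobsthal_succ hJ0 hJ1 hrec _)).ne'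
  have hD : 1 - J (m + 4) ≠ 0 :=
    hJ1 ▸ jacobsthal_one_sub_ne_zero hJ0 hJ1 hrec (n := m + 3) (by omega)
  have hG1 := geomConv_succ J t m
  have hG2 := geomConv_succ J t (m + 1)
  have hG2' := geomConv_add_two t hJ0 hJ1 hrec m
  have hJ3 := hrec (m + 1)
  have hJ4 := hrec (m + 2)
  refine circulant_mul_eq_smul_one_of hD (circulant_jacobsthal_mul hJ0 hJ1 hrec m)
    (circulant_mul_eq_smul_of_recurrence ?_ ?_ ?_ ?_) ?_
  · apply mul_left_cancel₀ hN
    linear_combination (1 - J (m + 4)) * hc0 - 2 * J (m + 3) * hcj m le_rfl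
      + (1 - J (m + 4)) * hG2 + (J (m + 2) + geomConv J t (m + 1) - t ^ (m + 1)) * ht
      - J (m + 3) * hs - J (m + 3) * hJ4
  · apply mul_left_cancel₀ hN
    linear_combination (1 - J (m + 4)) * hc1 - 2 * J (m + 3) * hc0 + J (m + 3) * hs
      - 2 * J (m + 3) * hG2' + 2 * (1 - J (m + 4)) * hG1
      + 2 * (J (m + 1) + geomConv J t m) * ht + J (m + 3) * hJ4 - 2 * J (m + 3) * hJ3
  · apply mul_left_cancel₀ hN
    linear_combination (1 - J (m + 4)) * hcj 0 (by omega) - 2 * J (m + 3) * hc1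
      + 2 * J (m + 3) * hs - ht
  · intro k hk
    apply mul_left_cancel₀ hN
    linear_combination (1 - J (m + 4)) * hcj (k + 1) (by omega)
      - 2 * J (m + 3) * hcj k (by omega) - t ^ (k + 1) * ht
  · exact jacobsthal_mulVec_apply_zero hJ1 m hN hs hc0 hc1 hcj

theorem circ_jacobsthal_mul_circ (hJ0 : J 0 = 0) (hJ1 : J 1 = 1)
    (hrec : ∀ m, J (m + 2) = J (m + 1) + 2 * J m) {n : ℕ} (hn : 2 < n) {s t : ℝ}
    {c : ℕ → ℝ}
    (ht : (J 1 - J (n + 1)) * t = 2 * J n)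
    (hs : s = J 1 - J n + 2 * geomConv J t (n - 2))
    (hc0 : J n * c 0 = J n + (geomConv J t (n - 1) - J 1 * t ^ (n - 1)))
    (hc1 : J n * c 1 = -J n + 2 * geomConv J t (n - 2))
    (hcj : ∀ j, 2 ≤ j → j ≤ n - 1 → J n * c j = -t ^ (j - 1)) :
    circ n (fun k => J (k + 1)) * circ n c = s • 1 := by
  obtain ⟨m, rfl⟩ : ∃ m, n = m + 3 := ⟨n - 3, by omega⟩
  have key := circulant_jacobsthal_mul_circulant hJ0 hJ1 hrec m (by simpa [hJ1] using ht)
    (by simpa [hJ1] using hs) (by simpa [hJ1] using hc0) (by simpa using hc1)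
    (fun k hk => by simpa using hcj (k + 2) (by omega) (by omega))
  rw [circ_eq_transpose_circulant, circ_eq_transpose_circulant, ← transpose_mul,
    Fin.circulant_mul_comm, key, transpose_smul, transpose_one]

end Jacobsthal

/-- The inverse of the g-circulant matrix of Jacobsthal numbers. -/
theorem inv_gCirc_jacobsthal
    (J : ℕ → ℝ) (hJ0 : J 0 = 0) (hJ1 : J 1 = 1)
    (hrec : ∀ m : ℕ, J (m + 2) = J (m + 1) + 2 * J m)
    (n r : ℕ) (hn : 2 < n) (hgcd : Nat.gcd n r = 1)
    (sn : ℝ)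
    (hsn : sn = J 1 - J n +
        2 * ∑ i ∈ Finset.Icc 1 (n - 2),
          J i * (2 * J n / (J 1 - J (n + 1))) ^ (n - (i + 1)))
    (hsnne : sn ≠ 0)
    (c : ℕ → ℝ)
    (hc0 : c 0 = 1 + 2 * ∑ i ∈ Finset.Icc 1 (n - 2),
        J (n - i) * (2 * J n) ^ (i - 1) / (J 1 - J (n + 1)) ^ i)
    (hc1 : c 1 = -1 + 4 * ∑ i ∈ Finset.Icc 1 (n - 2),
        J (n - 1 - i) * (2 * J n) ^ (i - 1) / (J 1 - J (n + 1)) ^ i)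
    (hcj : ∀ j : ℕ, 2 ≤ j → j ≤ n - 1 →
        c j = -(2 ^ (j - 1) * J n ^ (j - 2) / (J 1 - J (n + 1)) ^ (j - 1))) :
    (gCirc n r (fun m => J (m + 1)))⁻¹ = (1 / sn) • (circ n c * (Qg n r)ᵀ) := by
  have hD := jacobsthal_one_sub_ne_zero hJ0 hJ1 hrec hn.le
  have key := circ_jacobsthal_mul_circ hJ0 hJ1 hrec hn (s := sn) (c := c)
    (t := 2 * J n / (J 1 - J (n + 1)))
    (mul_div_cancel₀ _ hD) (by rw [hsn, sum_Icc_mul_pow_sub_eq_geomConv])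
    (by rw [hc0, mul_add, mul_one, mul_two_mul_sum_Icc_pow_div_pow,
      sum_Icc_mul_pow_eq_geomConv_sub _ _ hn.le])
    (by rw [hc1, ← sum_Icc_sub_one_mul_pow_eq_geomConv, ← mul_two_mul_sum_Icc_pow_div_pow]
        ring)
    (fun j hj hjn => by rw [hcj j hj hjn, mul_neg, mul_two_pow_mul_pow_div_pow _ _ hj])
  apply inv_eq_right_inv
  rw [gCirc_eq_Qg_mul_circ, mul_smul_comm, mul_assoc, ← mul_assoc (circ n _), key,
    smul_mul_assoc, one_mul, mul_smul_comm, Qg_mul_transpose_self hgcd, smul_smul, one_div,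
    inv_mul_cancel₀ hsnne, one_smul]
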